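/- Let X be a nonempty finite design space, let p and s be natural numbers with 0 < s < p, let m : X → Matrix (Fin p) (Fin p) ℝ, and let A : Matrix (Fin p) (Fin s) ℝ have rank s. Let w be a design (w(x) ≥ 0, ∑_{x∈X} w(x) = 1) such that M(w) = ∑_{x∈X} w(x) • m(x) is symmetric positive definite. Then ∑_{x ∈ X} w(x) * trace(M(w)⁻¹ * A * (Aᵀ * M(w)⁻¹ * A)⁻¹ * Aᵀ * M(w)⁻¹ * m(x)) = s. -/

import Mathlib

/-! By linearity of the trace, the `w`-average of `d(·, w)` is `trace (C * M(w))` with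
`C = M⁻¹ A (Aᵀ M⁻¹ A)⁻¹ Aᵀ M⁻¹`. Cancelling `M⁻¹ M` and cycling the trace turns this into
`trace ((Aᵀ M⁻¹ A)⁻¹ (Aᵀ M⁻¹ A)) = trace 1 = s`; full column rank of `A` is what makes
`Aᵀ M⁻¹ A` positive definite, hence invertible. -/

open Matrix

namespace Matrix

variable {K n k : Type*} [Field K] [Fintype k]

theorem mulVec_injective_of_rank_eq_card {A : Matrix n k K} (hA : A.rank = Fintype.card k) :
    Function.Injective A.mulVec := by
  rw [mulVec_injective_iff, linearIndependent_iff_card_eq_finrank_span, ← hA,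
    rank_eq_finrank_span_cols, Set.finrank]

theorem trace_mul_inv_mul_eq_card [Fintype n] [DecidableEq k] (A : Matrix n k K)
    (B : Matrix k n K) (hBA : IsUnit (B * A).det) : (A * (B * A)⁻¹ * B).trace = Fintype.card k := by
  rw [Matrix.mul_assoc, trace_mul_comm, Matrix.mul_assoc, nonsing_inv_mul _ hBA, trace_one]

theorem trace_mul_sum_smul [Fintype n] {X : Type*} [Fintype X] (C : Matrix n n K) (w : X → K)
    (m : X → Matrix n n K) :
    (C * ∑ x, w x • m x).trace = ∑ x, w x * (C * m x).trace := by
  simp only [Matrix.mul_sum, trace_sum, Matrix.mul_smul, trace_smul, smul_eq_mul]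

theorem PosDef.trace_inv_mul_mul_inv_transpose_mul_inv_mul_eq_card
    [Fintype n] [DecidableEq n] [DecidableEq k]
    {M : Matrix n n ℝ} (hM : M.PosDef) {A : Matrix n k ℝ} (hA : Function.Injective A.mulVec) :
    (M⁻¹ * A * (Aᵀ * M⁻¹ * A)⁻¹ * Aᵀ * M⁻¹ * M).trace = Fintype.card k := by
  have hN : (Aᵀ * M⁻¹ * A).PosDef := by
    simpa only [conjTranspose_eq_transpose_of_trivial] using
      hM.inv.conjTranspose_mul_mul_same hA
  calc (M⁻¹ * A * (Aᵀ * M⁻¹ * A)⁻¹ * Aᵀ * M⁻¹ * M).trace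
      = (M⁻¹ * (A * (Aᵀ * M⁻¹ * A)⁻¹ * Aᵀ)).trace := by
        rw [Matrix.mul_assoc _ M⁻¹ M, nonsing_inv_mul _ hM.det_pos.ne'.isUnit, Matrix.mul_one]
        simp only [Matrix.mul_assoc]
    _ = (A * (Aᵀ * M⁻¹ * A)⁻¹ * (Aᵀ * M⁻¹)).trace := by
        rw [trace_mul_comm]
        simp only [Matrix.mul_assoc]
    _ = Fintype.card k := trace_mul_inv_mul_eq_card A (Aᵀ * M⁻¹) hN.det_pos.ne'.isUnit

end Matrix

theorem DA_sensitivity_average_general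
    {X : Type*} [Fintype X] (p s : ℕ)
    (m : X → Matrix (Fin p) (Fin p) ℝ)
    (A : Matrix (Fin p) (Fin s) ℝ) (hA : A.rank = s)
    (w : X → ℝ)
    (hM : (∑ x, w x • m x).PosDef) :
    ∑ x, w x *
        ((∑ y, w y • m y)⁻¹ * A * (Aᵀ * (∑ y, w y • m y)⁻¹ * A)⁻¹ * Aᵀ *
            (∑ y, w y • m y)⁻¹ * m x).trace = (s : ℝ) := by
  have hinj : Function.Injective A.mulVec :=
    mulVec_injective_of_rank_eq_card (by rwa [Fintype.card_fin])
  rw [← trace_mul_sum_smul, hM.trace_inv_mul_mul_inv_transpose_mul_inv_mul_eq_card hinj,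
    Fintype.card_fin]

/-- Averaging identity: the mean of the sensitivity function of the
`D_A`-criterion under the design equals `s`. -/
theorem DA_sensitivity_average
    {X : Type*} [Fintype X] [Nonempty X] (p s : ℕ) (hs : 0 < s) (hsp : s < p)
    (m : X → Matrix (Fin p) (Fin p) ℝ)
    (A : Matrix (Fin p) (Fin s) ℝ) (hA : A.rank = s)
    (w : X → ℝ) (hw0 : ∀ x, 0 ≤ w x) (hw1 : ∑ x, w x = 1)
    (hM : (∑ x, w x • m x).PosDef) :
    ∑ x, w x *
        ((∑ y, w y • m y)⁻¹ * A * (Aᵀ * (∑ y, w y • m y)⁻¹ * A)⁻¹ * Aᵀ *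
            (∑ y, w y • m y)⁻¹ * m x).trace = (s : ℝ) :=
  DA_sensitivity_average_general p s m A hA w hM
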